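/- arXiv:1312.2151 — 2 statements merged into one kernel-verified Lean document; each statement's English description precedes it below -/
import Mathlib

section
/- Let X be a standard normal random variable with distribution function Φ and let S be a nonnegative random variable independent of X whose distribution function has upper endpoint 1 and which is not almost surely 0. Then for every ν > 1, lim_{u→∞} (1 − Φ(uν)) / P(SX > u) = 0. -/
open MeasureTheory ProbabilityTheory Filter

noncomputable section

/-- The Gumbel distribution function `Λ(x) = exp(-exp(-x))`. -/
def gumbel (x : ℝ) : ℝ := Real.exp (-Real.exp (-x))

/-- Distribution function of a real random variable. -/
def df {Ω : Type*} [MeasurableSpace Ω] (μ : Measure Ω) (Y : Ω → ℝ) : ℝ → ℝ :=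
  fun x => (μ {ω | Y ω ≤ x}).toReal

/-- Survival function of a real random variable. -/
def surv {Ω : Type*} [MeasurableSpace Ω] (μ : Measure Ω) (Y : Ω → ℝ) (u : ℝ) : ℝ :=
  (μ {ω | u < Y ω}).toReal

/-- Generalised inverse `G⁻¹(p) = inf {x : G x ≥ p}`. -/
def genInv (G : ℝ → ℝ) (p : ℝ) : ℝ := sInf {x : ℝ | p ≤ G x}

/-- The standard normal distribution function `Φ`. -/
def stdNormalCDF (x : ℝ) : ℝ := ((gaussianReal 0 1) (Set.Iic x)).toReal

/-- The distribution of `S` has upper endpoint `1`. -/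
def HasUpperEndpointOne {Ω : Type*} [MeasurableSpace Ω] (μ : Measure Ω) (S : Ω → ℝ) : Prop :=
  (∀ᵐ ω ∂μ, S ω ≤ 1) ∧ ∀ s : ℝ, s < 1 → 0 < μ {ω | s < S ω}

/-- The survival function of `S` is regularly varying at `1` with index `γ`. -/
def RegVarAtOne {Ω : Type*} [MeasurableSpace Ω] (μ : Measure Ω) (S : Ω → ℝ) (γ : ℝ) : Prop :=
  ∀ t : ℝ, 0 < t →
    Tendsto (fun u : ℝ => surv μ S (1 - t / u) / surv μ S (1 - 1 / u)) atTop (nhds (t ^ γ))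

/-- Assumption A of Hashorva and Weng, with explicit bounding variables `Sg` (index `γ`),
`St` (index `τ`) and threshold `ν ∈ (0,1)`. -/
def AssumptionA {Ω : Type*} [MeasurableSpace Ω] (μ : Measure Ω)
    (S Sg St : Ω → ℝ) (γ τ ν : ℝ) : Prop :=
  0 ≤ γ ∧ 0 ≤ τ ∧ ν ∈ Set.Ioo (0:ℝ) 1 ∧
  (∀ᵐ ω ∂μ, 0 ≤ S ω) ∧ HasUpperEndpointOne μ S ∧
  (∀ᵐ ω ∂μ, 0 ≤ Sg ω) ∧ (∀ᵐ ω ∂μ, 0 ≤ St ω) ∧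
  RegVarAtOne μ Sg γ ∧ RegVarAtOne μ St τ ∧
  ∀ u ∈ Set.Ioo ν (1:ℝ),
    μ {ω | u < S ω} ≤ μ {ω | u < St ω} ∧ μ {ω | u < Sg ω} ≤ μ {ω | u < S ω}

/-- `X_n, n ≥ 1` is a standard stationary Gaussian sequence with correlation function
`ρ` (`ρ 0 = 1`, `ρ n = E[X_1 X_{n+1}]`): every finite linear combination of the `X_i`,
`i ≥ 1`, is a centered Gaussian with variance given by the covariances `ρ (|i - j|)`. -/
def IsStdStationaryGaussianSeq {Ω : Type*} [MeasurableSpace Ω] (μ : Measure Ω)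
    (X : ℕ → Ω → ℝ) (ρ : ℕ → ℝ) : Prop :=
  (∀ i, Measurable (X i)) ∧ ρ 0 = 1 ∧
  ∀ (m : ℕ) (c : Fin m → ℝ) (k : ℕ),
    Measure.map (fun ω => ∑ i : Fin m, c i * X (k + 1 + (i : ℕ)) ω) μ
      = gaussianReal 0
          (Real.toNNReal (∑ i : Fin m, ∑ j : Fin m,
            c i * c j * ρ (((i : ℕ) : ℤ) - ((j : ℕ) : ℤ)).natAbs))

/-- `M_n^* = max_{1 ≤ i ≤ n} S_i X_i` (junk value `0` for `n = 0`). -/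
def Mstar {Ω : Type*} (S X : ℕ → Ω → ℝ) : ℕ → Ω → ℝ
  | 0 => fun _ => 0
  | 1 => fun ω => S 1 ω * X 1 ω
  | (n + 2) => fun ω => max (Mstar S X (n + 1) ω) (S (n + 2) ω * X (n + 2) ω)

/-- `H ∈ GMDA(w)`: Gumbel max-domain of attraction with positive scaling function `w`. -/
def GMDA (H : ℝ → ℝ) (w : ℝ → ℝ) : Prop :=
  (∀ u, 0 < w u) ∧
  ∀ x : ℝ, 0 ≤ x →
    Tendsto (fun u : ℝ => (1 - H (u + x / w u)) / (1 - H u)) atTop (nhds (Real.exp (-x)))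

/-!
Fix `1 < b < ν`. Since `S > 1/b` and `X > u b` force `S X > u`, independence gives
`P(S X > u) ≥ P(S > 1/b) P(X > u b)`, and `P(S > 1/b) > 0` because `S` has upper endpoint `1`.
With the Gaussian density `φ`, the tail bounds `φ(x + 1) ≤ 1 - Φ(x) ≤ φ(x) / x` (for `x > 0`) give
`(1 - Φ(u ν)) / (1 - Φ(u b)) ≤ exp(((u b + 1)² - (u ν)²) / 2) → 0` as soon as `u ν ≥ 1`.
-/

open Real Set Topology

lemma gaussianPDFReal_zero_one (x : ℝ) :
    gaussianPDFReal 0 1 x = (√(2 * π))⁻¹ * exp (-x ^ 2 / 2) := by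
  simp [gaussianPDFReal]

lemma gaussianPDFReal_zero_one_div (x y : ℝ) :
    gaussianPDFReal 0 1 x / gaussianPDFReal 0 1 y = exp ((y ^ 2 - x ^ 2) / 2) := by
  have hs : (√(2 * π))⁻¹ ≠ 0 := by positivity
  rw [gaussianPDFReal_zero_one, gaussianPDFReal_zero_one, mul_div_mul_left _ _ hs, ← exp_sub]
  ring_nf

lemma gaussianPDFReal_zero_one_le_of_le {x y : ℝ} (hx : 0 ≤ x) (hxy : x ≤ y) :
    gaussianPDFReal 0 1 y ≤ gaussianPDFReal 0 1 x := by
  rw [gaussianPDFReal_zero_one, gaussianPDFReal_zero_one]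
  exact mul_le_mul_of_nonneg_left (exp_le_exp.2 (by nlinarith)) (by positivity)

lemma hasDerivAt_gaussianPDFReal_zero_one (x : ℝ) :
    HasDerivAt (gaussianPDFReal 0 1) (-x * gaussianPDFReal 0 1 x) x := by
  have h : HasDerivAt (fun t : ℝ => -t ^ 2 / 2) (-x) x :=
    ((hasDerivAt_pow 2 x).neg.div_const 2).congr_deriv (by push_cast; ring)
  rw [funext gaussianPDFReal_zero_one]
  exact (h.exp.const_mul (√(2 * π))⁻¹).congr_deriv (by ring)

lemma integrable_mul_gaussianPDFReal_zero_one :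
    Integrable (fun x => x * gaussianPDFReal 0 1 x) := by
  refine ((integrable_mul_exp_neg_mul_sq (by norm_num : (0 : ℝ) < 1 / 2)).const_mul
    (√(2 * π))⁻¹).congr (ae_of_all _ fun x => ?_)
  simp only [gaussianPDFReal_zero_one]; ring_nf

lemma integral_Ioi_mul_gaussianPDFReal_zero_one (a : ℝ) :
    ∫ x in Ioi a, x * gaussianPDFReal 0 1 x = gaussianPDFReal 0 1 a := by
  have hlim : Tendsto (fun x => -gaussianPDFReal 0 1 x) atTop (𝓝 0) := by
    have h : Tendsto (fun x : ℝ => -x ^ 2 / 2) atTop atBot :=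
      (tendsto_neg_atTop_atBot.comp (tendsto_pow_atTop two_ne_zero)).atBot_div_const two_pos
    simpa [gaussianPDFReal_zero_one] using
      ((tendsto_exp_atBot.comp h).const_mul (√(2 * π))⁻¹).neg
  have := integral_Ioi_of_hasDerivAt_of_tendsto' (a := a)
    (fun x _ => (hasDerivAt_gaussianPDFReal_zero_one x).neg) ?_ hlim
  · simpa using this
  · exact integrable_mul_gaussianPDFReal_zero_one.integrableOn.congr_fun (fun x _ => by ring)
      measurableSet_Ioi

lemma gaussianReal_Ioi_toReal_eq_integral (a : ℝ) :
    (gaussianReal 0 1 (Ioi a)).toReal = ∫ x in Ioi a, gaussianPDFReal 0 1 x := by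
  rw [gaussianReal_apply_eq_integral 0 one_ne_zero, ENNReal.toReal_ofReal
    (setIntegral_nonneg measurableSet_Ioi fun x _ => gaussianPDFReal_nonneg 0 1 x)]

lemma gaussianReal_Ioi_toReal_le {a : ℝ} (ha : 0 < a) :
    (gaussianReal 0 1 (Ioi a)).toReal ≤ gaussianPDFReal 0 1 a / a := by
  rw [gaussianReal_Ioi_toReal_eq_integral, div_eq_inv_mul,
    ← integral_Ioi_mul_gaussianPDFReal_zero_one, ← integral_const_mul]
  refine setIntegral_mono_on (integrable_gaussianPDFReal 0 1).integrableOn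
    (integrable_mul_gaussianPDFReal_zero_one.integrableOn.const_mul _) measurableSet_Ioi
    fun x hx => ?_
  rw [← mul_assoc, inv_mul_eq_div]
  exact le_mul_of_one_le_left (gaussianPDFReal_nonneg 0 1 x) ((one_le_div ha).2 hx.le)

lemma gaussianPDFReal_add_one_le_gaussianReal_Ioi_toReal {a : ℝ} (ha : 0 ≤ a) :
    gaussianPDFReal 0 1 (a + 1) ≤ (gaussianReal 0 1 (Ioi a)).toReal := by
  calc gaussianPDFReal 0 1 (a + 1)
      = ∫ _ in Ioc a (a + 1), gaussianPDFReal 0 1 (a + 1) := by simp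
    _ ≤ ∫ x in Ioc a (a + 1), gaussianPDFReal 0 1 x :=
        setIntegral_mono_on (integrableOn_const (by simp))
          (integrable_gaussianPDFReal 0 1).integrableOn measurableSet_Ioc
          fun x hx => gaussianPDFReal_zero_one_le_of_le (ha.trans hx.1.le) hx.2
    _ ≤ ∫ x in Ioi a, gaussianPDFReal 0 1 x :=
        setIntegral_mono_set (integrable_gaussianPDFReal 0 1).integrableOn
          (ae_of_all _ (gaussianPDFReal_nonneg 0 1)) Ioc_subset_Ioi_self.eventuallyLE
    _ = (gaussianReal 0 1 (Ioi a)).toReal := (gaussianReal_Ioi_toReal_eq_integral a).symm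

lemma one_sub_stdNormalCDF (x : ℝ) :
    1 - stdNormalCDF x = (gaussianReal 0 1 (Ioi x)).toReal := by
  rw [stdNormalCDF, ← compl_Iic, prob_compl_eq_one_sub measurableSet_Iic,
    ENNReal.toReal_sub_of_le prob_le_one ENNReal.one_ne_top, ENNReal.toReal_one]

lemma tendsto_gaussianReal_Ioi_mul_div {b ν : ℝ} (hb : 0 ≤ b) (hbν : b < ν) :
    Tendsto (fun u => (gaussianReal 0 1 (Ioi (u * ν))).toReal /
      (gaussianReal 0 1 (Ioi (u * b))).toReal) atTop (𝓝 0) := by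
  have hν : 0 < ν := hb.trans_lt hbν
  have hquad : Tendsto (fun u => ((u * b + 1) ^ 2 - (u * ν) ^ 2) / 2) atTop atBot := by
    have hlin : Tendsto (fun u => (b ^ 2 - ν ^ 2) / 2 * u + b) atTop atBot :=
      tendsto_atBot_add_const_right _ b (tendsto_id.const_mul_atTop_of_neg (by nlinarith))
    exact (tendsto_atBot_add_const_right _ (1 / 2) (tendsto_id.atTop_mul_atBot₀ hlin)).congr
      fun u => by simp only [id]; ring
  refine squeeze_zero' (Eventually.of_forall fun u => by positivity) ?_
    (tendsto_exp_atBot.comp hquad)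
  filter_upwards [eventually_ge_atTop ν⁻¹] with u hu
  have huν : 1 ≤ u * ν := (inv_le_iff_one_le_mul₀ hν).1 hu
  rw [Function.comp_apply, ← gaussianPDFReal_zero_one_div]
  refine div_le_div₀ (gaussianPDFReal_nonneg 0 1 _) ?_ (gaussianPDFReal_pos 0 1 _ one_ne_zero)
    (gaussianPDFReal_add_one_le_gaussianReal_Ioi_toReal
      (mul_nonneg ((inv_pos.2 hν).le.trans hu) hb))
  exact (gaussianReal_Ioi_toReal_le (by linarith)).trans
    (div_le_self (gaussianPDFReal_nonneg 0 1 _) huν)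

lemma ProbabilityTheory.IndepFun.measure_lt_mul_le_measure_lt_mul {Ω : Type*}
    [MeasurableSpace Ω] {μ : Measure Ω} {S X : Ω → ℝ} {ν : Measure ℝ}
    (hSX : IndepFun S X μ) (hX : HasLaw X ν μ) {c u : ℝ} (hc : 0 < c) (hu : 0 ≤ u) :
    μ {ω | c < S ω} * ν (Ioi (u / c)) ≤ μ {ω | u < S ω * X ω} := by
  have hsub : S ⁻¹' Ioi c ∩ X ⁻¹' Ioi (u / c) ⊆ {ω | u < S ω * X ω} := by
    rintro ω ⟨hSω, hXω⟩
    have hXω : u / c < X ω := hXω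
    have hXpos : 0 < X ω := (div_nonneg hu hc.le).trans_lt hXω
    calc u = c * (u / c) := (mul_div_cancel₀ u hc.ne').symm
      _ < c * X ω := by gcongr
      _ < S ω * X ω := by gcongr; exact hSω
  calc μ {ω | c < S ω} * ν (Ioi (u / c)) = μ (S ⁻¹' Ioi c ∩ X ⁻¹' Ioi (u / c)) := by
        rw [hSX.measure_inter_preimage_eq_mul _ _ measurableSet_Ioi measurableSet_Ioi,
          ← hX.map_eq, Measure.map_apply_of_aemeasurable hX.aemeasurable measurableSet_Ioi]
        rfl
    _ ≤ μ {ω | u < S ω * X ω} := measure_mono hsub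

theorem gaussian_tail_negligible_general
    {Ω : Type*} [MeasurableSpace Ω] (μ : Measure Ω) [IsProbabilityMeasure μ]
    (X S : Ω → ℝ)
    (hXgauss : Measure.map X μ = gaussianReal 0 1)
    (hSXindep : IndepFun S X μ)
    (hupper : HasUpperEndpointOne μ S) :
    ∀ ν : ℝ, 1 < ν →
      Tendsto (fun u : ℝ =>
          (1 - stdNormalCDF (u * ν)) / (μ {ω | u < S ω * X ω}).toReal)
        atTop (nhds 0) := by
  intro ν hν
  obtain ⟨b, hb, hbν⟩ := exists_between hν
  have hb0 : 0 < b := one_pos.trans hb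
  have hX : HasLaw X (gaussianReal 0 1) μ :=
    ⟨.of_map_ne_zero (hXgauss ▸ IsProbabilityMeasure.ne_zero _), hXgauss⟩
  set p := (μ {ω | b⁻¹ < S ω}).toReal
  have hp : 0 < p :=
    ENNReal.toReal_pos (hupper.2 _ (inv_lt_one_of_one_lt₀ hb)).ne' (measure_ne_top _ _)
  have hden (u : ℝ) (hu : 0 ≤ u) :
      p * (gaussianReal 0 1 (Ioi (u * b))).toReal ≤ (μ {ω | u < S ω * X ω}).toReal := by
    rw [← ENNReal.toReal_mul, ← div_inv_eq_mul]
    exact ENNReal.toReal_mono (measure_ne_top _ _)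
      (hSXindep.measure_lt_mul_le_measure_lt_mul hX (inv_pos.2 hb0) hu)
  have hlim := (tendsto_gaussianReal_Ioi_mul_div hb0.le hbν).const_mul p⁻¹
  rw [mul_zero] at hlim
  refine squeeze_zero' (Eventually.of_forall fun u => ?_) ?_ hlim
  · rw [one_sub_stdNormalCDF]
    positivity
  filter_upwards [eventually_ge_atTop 0] with u hu
  have htail : 0 < (gaussianReal 0 1 (Ioi (u * b))).toReal :=
    (gaussianPDFReal_pos 0 1 _ one_ne_zero).trans_le
      (gaussianPDFReal_add_one_le_gaussianReal_Ioi_toReal (mul_nonneg hu hb0.le))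
  rw [one_sub_stdNormalCDF]
  calc _ ≤ (gaussianReal 0 1 (Ioi (u * ν))).toReal /
        (p * (gaussianReal 0 1 (Ioi (u * b))).toReal) :=
        div_le_div_of_nonneg_left (by positivity) (mul_pos hp htail) (hden u hu)
    _ = _ := by field_simp

/-- the Gaussian tail at `uν` is negligible compared with the tail of `SX`. -/
theorem gaussian_tail_negligible
    {Ω : Type*} [MeasurableSpace Ω] (μ : Measure Ω) [IsProbabilityMeasure μ]
    (X S : Ω → ℝ)
    (hXmeas : Measurable X) (hSmeas : Measurable S)
    (hXgauss : Measure.map X μ = gaussianReal 0 1)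
    (hSXindep : IndepFun S X μ)
    (hSnonneg : ∀ᵐ ω ∂μ, 0 ≤ S ω)
    (hupper : HasUpperEndpointOne μ S)
    (hSne0 : ¬ (∀ᵐ ω ∂μ, S ω = 0)) :
    ∀ ν : ℝ, 1 < ν →
      Tendsto (fun u : ℝ =>
          (1 - stdNormalCDF (u * ν)) / (μ {ω | u < S ω * X ω}).toReal)
        atTop (nhds 0) :=
  gaussian_tail_negligible_general μ X S hXgauss hSXindep hupper
end
end

section
/- Let X be a standard normal random variable with distribution function Φ and let S be a nonnegative random variable independent of X whose distribution function has upper endpoint 1 and which is not almost surely 0. Let G be the distribution function of SX and G⁻¹ its generalised inverse. Then G⁻¹(1 − 1/n) ~ Φ⁻¹(1 − 1/n) ~ (2 ln n)^{1/2} as n → ∞, where ~ denotes asymptotic equivalence. -/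
open MeasureTheory ProbabilityTheory Filter

noncomputable section

section AuxLemmas


open Real Set

lemma my_tendsto_sqrt_atTop : Tendsto Real.sqrt atTop atTop := by
  apply tendsto_atTop_atTop.2
  intro b
  refine ⟨(max b 0) ^ 2, fun x hx => ?_⟩
  calc b ≤ max b 0 := le_max_left _ _
    _ = Real.sqrt ((max b 0) ^ 2) := (Real.sqrt_sq (le_max_right _ _)).symm
    _ ≤ Real.sqrt x := Real.sqrt_le_sqrt hx

lemma my_exp_aux {C a b : ℝ} (hC : 0 < C) (h : a ≤ Real.log C + b) :
    Real.exp a ≤ C * Real.exp b := by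
  calc Real.exp a ≤ Real.exp (Real.log C + b) := Real.exp_le_exp.2 h
    _ = C * Real.exp b := by rw [Real.exp_add, Real.exp_log hC]

lemma my_quad_event {ε : ℝ} (hε : 0 < ε) (A B : ℝ) :
    ∀ᶠ u : ℝ in atTop, A + B * u ≤ ε * u ^ 2 := by
  filter_upwards [eventually_ge_atTop (1 : ℝ), eventually_ge_atTop ((|A| + |B|) / ε)]
    with u h1 h2
  have h2' : |A| + |B| ≤ u * ε := (div_le_iff₀ hε).1 h2
  nlinarith [le_abs_self A, le_abs_self B, abs_nonneg A, abs_nonneg B,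
    mul_le_mul_of_nonneg_right h2' (by linarith : (0:ℝ) ≤ u)]

lemma my_gaussianPDFReal_std (x : ℝ) :
    gaussianPDFReal 0 1 x = (Real.sqrt (2 * π))⁻¹ * Real.exp (-x ^ 2 / 2) := by
  simp [gaussianPDFReal]

lemma my_sqrt_two_pi_ge_one : (1 : ℝ) ≤ Real.sqrt (2 * π) :=
  Real.one_le_sqrt.2 (by nlinarith [Real.pi_gt_three])

lemma my_gauss_tail_upper {u : ℝ} (hu : 1 ≤ u) :
    ((gaussianReal 0 1) (Set.Ioi u)).toReal ≤ Real.exp (-u ^ 2 / 2) := by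
  have hint : IntegrableOn (fun x : ℝ => (Real.exp (-u ^ 2 / 2) * Real.exp u) * Real.exp (-x))
      (Set.Ioi u) := by
    have h0 : IntegrableOn (fun x : ℝ => Real.exp (-(1 : ℝ) * x)) (Set.Ioi u) :=
      exp_neg_integrableOn_Ioi u one_pos
    have h1 : IntegrableOn (fun x : ℝ => Real.exp (-x)) (Set.Ioi u) := by
      simpa using h0
    exact h1.const_mul _
  have key : (gaussianReal 0 1) (Set.Ioi u) ≤ ENNReal.ofReal (Real.exp (-u ^ 2 / 2)) := by
    rw [gaussianReal_apply 0 one_ne_zero]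
    calc ∫⁻ x in Set.Ioi u, gaussianPDF 0 1 x
        ≤ ∫⁻ x in Set.Ioi u,
            ENNReal.ofReal ((Real.exp (-u ^ 2 / 2) * Real.exp u) * Real.exp (-x)) := by
          apply setLIntegral_mono
          · fun_prop
          · intro x hx
            rw [gaussianPDF_def]
            apply ENNReal.ofReal_le_ofReal
            rw [my_gaussianPDFReal_std]
            have hx' : u < x := hx
            have h1 : (Real.sqrt (2 * π))⁻¹ * Real.exp (-x ^ 2 / 2)
                ≤ Real.exp (-x ^ 2 / 2) := by
              have := Real.exp_nonneg (-x ^ 2 / 2)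
              nlinarith [my_sqrt_two_pi_ge_one,
                inv_le_one_of_one_le₀ my_sqrt_two_pi_ge_one]
            have h2 : Real.exp (-x ^ 2 / 2)
                ≤ (Real.exp (-u ^ 2 / 2) * Real.exp u) * Real.exp (-x) := by
              rw [← Real.exp_add, ← Real.exp_add]
              apply Real.exp_le_exp.2
              nlinarith
            linarith
      _ = ENNReal.ofReal (∫ x in Set.Ioi u,
            (Real.exp (-u ^ 2 / 2) * Real.exp u) * Real.exp (-x)) := by
          rw [ofReal_integral_eq_lintegral_ofReal hint]
          filter_upwards with x
          positivity
      _ = ENNReal.ofReal (Real.exp (-u ^ 2 / 2)) := by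
          congr 1
          rw [MeasureTheory.integral_const_mul, integral_exp_neg_Ioi]
          rw [mul_assoc, ← Real.exp_add]
          simp
  exact ENNReal.toReal_le_of_le_ofReal (Real.exp_nonneg _) key

lemma my_gauss_tail_lower {u : ℝ} (hu : 0 ≤ u) :
    (Real.sqrt (2 * π))⁻¹ * Real.exp (-(u + 1) ^ 2 / 2)
      ≤ ((gaussianReal 0 1) (Set.Ioi u)).toReal := by
  have key : ENNReal.ofReal ((Real.sqrt (2 * π))⁻¹ * Real.exp (-(u + 1) ^ 2 / 2))
      ≤ (gaussianReal 0 1) (Set.Ioi u) := by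
    calc ENNReal.ofReal ((Real.sqrt (2 * π))⁻¹ * Real.exp (-(u + 1) ^ 2 / 2))
        = ENNReal.ofReal (gaussianPDFReal 0 1 (u + 1)) * volume (Set.Ioc u (u + 1)) := by
          rw [Real.volume_Ioc, my_gaussianPDFReal_std]
          norm_num
      _ = ∫⁻ _x in Set.Ioc u (u + 1), ENNReal.ofReal (gaussianPDFReal 0 1 (u + 1)) :=
          (setLIntegral_const _ _).symm
      _ ≤ ∫⁻ x in Set.Ioc u (u + 1), gaussianPDF 0 1 x := by
          apply setLIntegral_mono (measurable_gaussianPDF 0 1)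
          intro x hx
          rw [gaussianPDF_def]
          apply ENNReal.ofReal_le_ofReal
          rw [my_gaussianPDFReal_std, my_gaussianPDFReal_std]
          have h1 : u < x := hx.1
          have h2 : x ≤ u + 1 := hx.2
          apply mul_le_mul_of_nonneg_left _ (by positivity)
          apply Real.exp_le_exp.2
          nlinarith
      _ = (gaussianReal 0 1) (Set.Ioc u (u + 1)) :=
          (gaussianReal_apply 0 one_ne_zero _).symm
      _ ≤ (gaussianReal 0 1) (Set.Ioi u) := measure_mono Set.Ioc_subset_Ioi_self
  have h := ENNReal.toReal_mono (measure_ne_top _ _) key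
  rwa [ENNReal.toReal_ofReal (by positivity)] at h

end AuxLemmas

section QuantilePart

open Real Set


set_option maxHeartbeats 1000000 in
lemma my_quantile_lim {H : ℝ → ℝ} (mono : Monotone H)
    (hup : ∀ ε : ℝ, 0 < ε → ∀ᶠ u : ℝ in atTop,
      1 - H u ≤ Real.exp (-((1 - ε) * u ^ 2) / 2))
    (hlo : ∀ ε : ℝ, 0 < ε → ∀ᶠ u : ℝ in atTop,
      Real.exp (-((1 + ε) * u ^ 2) / 2) ≤ 1 - H u) :
    Tendsto (fun n : ℕ => sInf {x : ℝ | 1 - 1 / (n : ℝ) ≤ H x} / Real.sqrt (2 * Real.log n))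
      atTop (nhds 1) := by
  refine Metric.tendsto_nhds.2 (fun ε hε => ?_)
  set δ : ℝ := min (ε / 2) (1 / 2) with hδdef
  have hδ0 : 0 < δ := lt_min (by linarith) (by norm_num)
  have hδhalf : δ ≤ 1 / 2 := min_le_right _ _
  have hδε : δ < ε := lt_of_le_of_lt (min_le_left _ _) (by linarith)
  set r : ℕ → ℝ := fun n => Real.sqrt (2 * Real.log n) with hrdef
  have hrt : Tendsto r atTop atTop :=
    my_tendsto_sqrt_atTop.comp
      ((Real.tendsto_log_atTop.comp tendsto_natCast_atTop_atTop).const_mul_atTop two_pos)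
  have hbt : Tendsto (fun n : ℕ => (1 + δ) * r n) atTop atTop :=
    hrt.const_mul_atTop (by linarith)
  have hct : Tendsto (fun n : ℕ => (1 - δ) * r n) atTop atTop :=
    hrt.const_mul_atTop (by linarith)
  have hupev := hbt.eventually (hup (δ / 2) (by linarith))
  have hloev := hct.eventually (hlo δ hδ0)
  filter_upwards [hupev, hloev, eventually_ge_atTop 2] with n h1 h2 hn2
  have hn1 : (1 : ℝ) < n := by exact_mod_cast Nat.lt_of_lt_of_le one_lt_two hn2
  have hlog : 0 < Real.log n := Real.log_pos hn1
  have hrpos : 0 < r n := Real.sqrt_pos.2 (by linarith)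
  have hrsq : r n ^ 2 = 2 * Real.log n := Real.sq_sqrt (by linarith)
  have hnpos : (0 : ℝ) < n := by linarith
  have hexplog : Real.exp (-Real.log n) = 1 / (n : ℝ) := by
    rw [Real.exp_neg, Real.exp_log hnpos, one_div]
  have hb_mem : (1 : ℝ) - 1 / (n : ℝ) ≤ H ((1 + δ) * r n) := by
    have hbsq : ((1 + δ) * r n) ^ 2 = (1 + δ) ^ 2 * (2 * Real.log n) := by
      rw [mul_pow, hrsq]
    have hexp : Real.exp (-((1 - δ / 2) * ((1 + δ) * r n) ^ 2) / 2) ≤ 1 / (n : ℝ) := by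
      rw [← hexplog]
      apply Real.exp_le_exp.2
      rw [hbsq]
      have hsq : δ ^ 2 ≤ 1 := by nlinarith
      have hcube : δ ^ 3 ≤ δ := by nlinarith [mul_le_mul_of_nonneg_left hsq hδ0.le]
      have hK : 1 ≤ (1 - δ / 2) * (1 + δ) ^ 2 := by nlinarith
      nlinarith [mul_le_mul_of_nonneg_right hK hlog.le]
    linarith [h1]
  have hc_lb : ∀ x : ℝ, 1 - 1 / (n : ℝ) ≤ H x → (1 - δ) * r n ≤ x := by
    intro x hx
    by_contra hlt
    push_neg at hlt
    have hHx : H x ≤ H ((1 - δ) * r n) := mono hlt.le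
    have hcsq : ((1 - δ) * r n) ^ 2 = (1 - δ) ^ 2 * (2 * Real.log n) := by
      rw [mul_pow, hrsq]
    have hexp : 1 / (n : ℝ) < Real.exp (-((1 + δ) * ((1 - δ) * r n) ^ 2) / 2) := by
      rw [← hexplog]
      apply Real.exp_lt_exp.2
      rw [hcsq]
      have hsq : δ ^ 2 ≤ 1 := by nlinarith
      have hcube : δ ^ 3 ≤ δ := by nlinarith [mul_le_mul_of_nonneg_left hsq hδ0.le]
      have hK : (1 + δ) * (1 - δ) ^ 2 < 1 := by nlinarith [mul_pos hδ0 hδ0]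
      nlinarith [mul_lt_mul_of_pos_right hK hlog]
    linarith [h2]
  have hset_ne : Set.Nonempty {x : ℝ | 1 - 1 / (n : ℝ) ≤ H x} := ⟨_, hb_mem⟩
  have hbdd : BddBelow {x : ℝ | 1 - 1 / (n : ℝ) ≤ H x} :=
    ⟨(1 - δ) * r n, fun x hx => hc_lb x hx⟩
  have hq_le : sInf {x : ℝ | 1 - 1 / (n : ℝ) ≤ H x} ≤ (1 + δ) * r n := csInf_le hbdd hb_mem
  have hq_ge : (1 - δ) * r n ≤ sInf {x : ℝ | 1 - 1 / (n : ℝ) ≤ H x} := le_csInf hset_ne hc_lb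
  have hdiv_le : sInf {x : ℝ | 1 - 1 / (n : ℝ) ≤ H x} / r n ≤ 1 + δ := by
    rw [div_le_iff₀ hrpos]; exact hq_le
  have hdiv_ge : 1 - δ ≤ sInf {x : ℝ | 1 - 1 / (n : ℝ) ≤ H x} / r n := by
    rw [le_div_iff₀ hrpos]; exact hq_ge
  rw [Real.dist_eq, abs_sub_lt_iff]
  constructor <;> linarith

lemma my_stdNormalCDF_mono : Monotone stdNormalCDF := fun a b hab =>
  ENNReal.toReal_mono (measure_ne_top _ _) (measure_mono (Set.Iic_subset_Iic.2 hab))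

lemma my_stdNormal_tail_eq (u : ℝ) :
    ((gaussianReal 0 1) (Set.Ioi u)).toReal = 1 - stdNormalCDF u := by
  have hadd := measure_add_measure_compl (μ := gaussianReal 0 1) (measurableSet_Iic (a := u))
  rw [Set.compl_Iic, measure_univ] at hadd
  have h : ((gaussianReal 0 1) (Set.Iic u)).toReal + ((gaussianReal 0 1) (Set.Ioi u)).toReal
      = 1 := by
    rw [← ENNReal.toReal_add (measure_ne_top _ _) (measure_ne_top _ _), hadd, ENNReal.toReal_one]
  unfold stdNormalCDF
  linarith

lemma my_phi_hup : ∀ ε : ℝ, 0 < ε → ∀ᶠ u : ℝ in atTop,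
    1 - stdNormalCDF u ≤ Real.exp (-((1 - ε) * u ^ 2) / 2) := by
  intro ε hε
  filter_upwards [eventually_ge_atTop (1 : ℝ)] with u hu
  rw [← my_stdNormal_tail_eq]
  calc ((gaussianReal 0 1) (Set.Ioi u)).toReal ≤ Real.exp (-u ^ 2 / 2) :=
        my_gauss_tail_upper hu
    _ ≤ Real.exp (-((1 - ε) * u ^ 2) / 2) := by
        apply Real.exp_le_exp.2
        nlinarith [sq_nonneg u]

lemma my_phi_hlo : ∀ ε : ℝ, 0 < ε → ∀ᶠ u : ℝ in atTop,
    Real.exp (-((1 + ε) * u ^ 2) / 2) ≤ 1 - stdNormalCDF u := by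
  intro ε hε
  have hC0 : (0 : ℝ) < (Real.sqrt (2 * π))⁻¹ := by positivity
  filter_upwards [my_quad_event (show (0:ℝ) < ε / 2 by linarith)
    (1 / 2 - Real.log (Real.sqrt (2 * π))⁻¹) 1, eventually_ge_atTop (0 : ℝ)] with u hquad hu
  rw [← my_stdNormal_tail_eq]
  calc Real.exp (-((1 + ε) * u ^ 2) / 2)
      ≤ (Real.sqrt (2 * π))⁻¹ * Real.exp (-(u + 1) ^ 2 / 2) := by
        apply my_exp_aux hC0
        have hexpand : (u + 1) ^ 2 = u ^ 2 + 2 * u + 1 := by ring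
        nlinarith
    _ ≤ ((gaussianReal 0 1) (Set.Ioi u)).toReal := my_gauss_tail_lower hu

end QuantilePart

/-- `G⁻¹(1 - 1/n) ~ Φ⁻¹(1 - 1/n) ~ √(2 ln n)`. -/
theorem genInv_asymptotics
    {Ω : Type*} [MeasurableSpace Ω] (μ : Measure Ω) [IsProbabilityMeasure μ]
    (X S : Ω → ℝ)
    (hXmeas : Measurable X) (hSmeas : Measurable S)
    (hXgauss : Measure.map X μ = gaussianReal 0 1)
    (hSXindep : IndepFun S X μ)
    (hSnonneg : ∀ᵐ ω ∂μ, 0 ≤ S ω)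
    (hupper : HasUpperEndpointOne μ S)
    (hSne0 : ¬ (∀ᵐ ω ∂μ, S ω = 0))
    (G : ℝ → ℝ) (hG : G = df μ (fun ω => S ω * X ω)) :
    Tendsto (fun n : ℕ =>
        genInv G (1 - 1 / (n : ℝ)) / genInv stdNormalCDF (1 - 1 / (n : ℝ)))
      atTop (nhds 1) ∧
    Tendsto (fun n : ℕ =>
        genInv stdNormalCDF (1 - 1 / (n : ℝ)) / Real.sqrt (2 * Real.log n))
      atTop (nhds 1) := by
  
  classical
  have hYmeas : Measurable fun ω => S ω * X ω := hSmeas.mul hXmeas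
  have hGmono : Monotone G := by
    rw [hG]
    intro a b hab
    exact ENNReal.toReal_mono (measure_ne_top _ _)
      (measure_mono (fun ω h => le_trans h hab))
  have hGtail : ∀ u : ℝ, 1 - G u = (μ {ω | u < S ω * X ω}).toReal := by
    intro u
    have hms : MeasurableSet {ω | S ω * X ω ≤ u} := hYmeas measurableSet_Iic
    have hadd := measure_add_measure_compl (μ := μ) hms
    rw [measure_univ] at hadd
    have hcompl : {ω | S ω * X ω ≤ u}ᶜ = {ω | u < S ω * X ω} := by
      ext ω; simp [not_le]
    rw [hcompl] at hadd
    have h : (μ {ω | S ω * X ω ≤ u}).toReal + (μ {ω | u < S ω * X ω}).toReal = 1 := by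
      rw [← ENNReal.toReal_add (measure_ne_top _ _) (measure_ne_top _ _), hadd,
        ENNReal.toReal_one]
    rw [hG]
    unfold df
    linarith
  have hXtail : ∀ u : ℝ, μ {ω | u < X ω} = (gaussianReal 0 1) (Set.Ioi u) := by
    intro u
    rw [← hXgauss, Measure.map_apply hXmeas measurableSet_Ioi]
    rfl
  have hupG : ∀ ε : ℝ, 0 < ε → ∀ᶠ u : ℝ in atTop,
      1 - G u ≤ Real.exp (-((1 - ε) * u ^ 2) / 2) := by
    intro ε hε
    filter_upwards [eventually_ge_atTop (1 : ℝ)] with u hu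
    rw [hGtail]
    have hsub : {ω | u < S ω * X ω} ≤ᶠ[MeasureTheory.ae μ] {ω | u < X ω} := by
      filter_upwards [hSnonneg, hupper.1] with ω h0 h1
      intro hY
      have hY' : u < S ω * X ω := hY
      show u < X ω
      have hX0 : 0 < X ω := by
        by_contra hX0
        push_neg at hX0
        nlinarith [mul_nonneg h0 (neg_nonneg.2 hX0), hY']
      nlinarith [mul_nonneg (sub_nonneg.2 h1) hX0.le, hY']
    calc (μ {ω | u < S ω * X ω}).toReal
        ≤ ((gaussianReal 0 1) (Set.Ioi u)).toReal := by
          rw [← hXtail]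
          exact ENNReal.toReal_mono (measure_ne_top _ _) (measure_mono_ae hsub)
      _ ≤ Real.exp (-u ^ 2 / 2) := my_gauss_tail_upper hu
      _ ≤ Real.exp (-((1 - ε) * u ^ 2) / 2) := by
          apply Real.exp_le_exp.2; nlinarith [sq_nonneg u]
  have hloG : ∀ ε : ℝ, 0 < ε → ∀ᶠ u : ℝ in atTop,
      Real.exp (-((1 + ε) * u ^ 2) / 2) ≤ 1 - G u := by
    intro ε hε
    have hK1 : 1 < 1 + ε / 4 := by linarith
    have hK0 : (0:ℝ) ≤ 1 + ε / 4 := by linarith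
    have hsK1 : 1 < Real.sqrt (1 + ε / 4) := by
      have := Real.sqrt_lt_sqrt (by norm_num : (0:ℝ) ≤ 1) hK1
      rwa [Real.sqrt_one] at this
    have hsK0 : 0 < Real.sqrt (1 + ε / 4) := by linarith
    have hs1 : (Real.sqrt (1 + ε / 4))⁻¹ < 1 := inv_lt_one_of_one_lt₀ hsK1
    have hp0 : 0 < μ {ω | (Real.sqrt (1 + ε / 4))⁻¹ < S ω} := hupper.2 _ hs1
    have hpr0 : 0 < (μ {ω | (Real.sqrt (1 + ε / 4))⁻¹ < S ω}).toReal :=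
      ENNReal.toReal_pos hp0.ne' (measure_ne_top _ _)
    set pr : ℝ := (μ {ω | (Real.sqrt (1 + ε / 4))⁻¹ < S ω}).toReal with hprdef
    have hC0 : 0 < pr * (Real.sqrt (2 * Real.pi))⁻¹ := by positivity
    have hKsq : Real.sqrt (1 + ε / 4) ^ 2 = 1 + ε / 4 := Real.sq_sqrt hK0
    filter_upwards [my_quad_event (show (0:ℝ) < 3 * ε / 8 by linarith)
      (1 / 2 - Real.log (pr * (Real.sqrt (2 * Real.pi))⁻¹)) (Real.sqrt (1 + ε / 4)),
      eventually_gt_atTop (0 : ℝ)] with u hquad hu0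
    rw [hGtail]
    have hKu0 : 0 ≤ Real.sqrt (1 + ε / 4) * u := by positivity
    calc Real.exp (-((1 + ε) * u ^ 2) / 2)
        ≤ (pr * (Real.sqrt (2 * Real.pi))⁻¹)
            * Real.exp (-(Real.sqrt (1 + ε / 4) * u + 1) ^ 2 / 2) := by
          apply my_exp_aux hC0
          have hexpand : (Real.sqrt (1 + ε / 4) * u + 1) ^ 2
              = (1 + ε / 4) * u ^ 2 + 2 * (Real.sqrt (1 + ε / 4) * u) + 1 := by
            have h : (Real.sqrt (1 + ε / 4) * u + 1) ^ 2
                = Real.sqrt (1 + ε / 4) ^ 2 * u ^ 2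
                  + 2 * (Real.sqrt (1 + ε / 4) * u) + 1 := by ring
            rw [h, hKsq]
          rw [hexpand]
          linarith [hquad]
      _ = pr * ((Real.sqrt (2 * Real.pi))⁻¹
            * Real.exp (-(Real.sqrt (1 + ε / 4) * u + 1) ^ 2 / 2)) := by ring
      _ ≤ pr * ((gaussianReal 0 1) (Set.Ioi (Real.sqrt (1 + ε / 4) * u))).toReal :=
          mul_le_mul_of_nonneg_left (my_gauss_tail_lower hKu0) hpr0.le
      _ = (μ ({ω | (Real.sqrt (1 + ε / 4))⁻¹ < S ω}
            ∩ {ω | Real.sqrt (1 + ε / 4) * u < X ω})).toReal := by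
          rw [show ({ω | (Real.sqrt (1 + ε / 4))⁻¹ < S ω}
              ∩ {ω | Real.sqrt (1 + ε / 4) * u < X ω})
              = S ⁻¹' (Set.Ioi (Real.sqrt (1 + ε / 4))⁻¹)
                ∩ X ⁻¹' (Set.Ioi (Real.sqrt (1 + ε / 4) * u)) from rfl]
          rw [hSXindep.measure_inter_preimage_eq_mul _ _ measurableSet_Ioi measurableSet_Ioi]
          rw [ENNReal.toReal_mul, hprdef, ← hXtail]
          rfl
      _ ≤ (μ {ω | u < S ω * X ω}).toReal := by
          apply ENNReal.toReal_mono (measure_ne_top _ _)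
          apply measure_mono
          rintro ω ⟨hS, hX⟩
          simp only [Set.mem_setOf_eq] at hS hX ⊢
          have hXpos : 0 < X ω := lt_trans (by positivity) hX
          have h1 : u = (Real.sqrt (1 + ε / 4))⁻¹ * (Real.sqrt (1 + ε / 4) * u) :=
            (inv_mul_cancel_left₀ (ne_of_gt hsK0) u).symm
          have h2 : (Real.sqrt (1 + ε / 4))⁻¹ * (Real.sqrt (1 + ε / 4) * u)
              < (Real.sqrt (1 + ε / 4))⁻¹ * X ω :=
            mul_lt_mul_of_pos_left hX (by positivity)
          have h3 : (Real.sqrt (1 + ε / 4))⁻¹ * X ω < S ω * X ω :=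
            mul_lt_mul_of_pos_right hS hXpos
          linarith
  have hPhi : Tendsto (fun n : ℕ =>
      genInv stdNormalCDF (1 - 1 / (n : ℝ)) / Real.sqrt (2 * Real.log n))
      atTop (nhds 1) := my_quantile_lim my_stdNormalCDF_mono my_phi_hup my_phi_hlo
  have hGlim : Tendsto (fun n : ℕ =>
      genInv G (1 - 1 / (n : ℝ)) / Real.sqrt (2 * Real.log n))
      atTop (nhds 1) := my_quantile_lim hGmono hupG hloG
  refine ⟨?_, hPhi⟩
  have hinv : Tendsto (fun n : ℕ =>
      Real.sqrt (2 * Real.log n) / genInv stdNormalCDF (1 - 1 / (n : ℝ)))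
      atTop (nhds 1) := by
    have h := hPhi.inv₀ one_ne_zero
    simpa [inv_div] using h
  have hmul := hGlim.mul hinv
  rw [mul_one] at hmul
  apply Tendsto.congr' _ hmul
  filter_upwards [eventually_ge_atTop 2] with n hn2
  have hn1 : (1 : ℝ) < n := by exact_mod_cast Nat.lt_of_lt_of_le one_lt_two hn2
  have hlog : 0 < Real.log n := Real.log_pos hn1
  have hrpos : 0 < Real.sqrt (2 * Real.log n) := Real.sqrt_pos.2 (by linarith)
  rw [div_mul_div_comm, mul_comm (genInv G (1 - 1 / (n : ℝ))) (Real.sqrt (2 * Real.log n)),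
    mul_div_mul_left _ _ (ne_of_gt hrpos)]
end
end
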